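/- arXiv:2306.15582 — 7 statements merged into one kernel-verified Lean document; each statement's English description precedes it below -/
import Mathlib

section
/- Let (A, ▷) be an algebra over a field with associator ass(x,y,z) = x▷(y▷z) - (x▷y)▷z and triple bracket [x,y,z] = ass(x,y,z) - ass(y,x,z). If A satisfies (1) [x,y,z]+[y,z,x]+[z,x,y] = 0 for all x,y,z, and (2) w▷[x,y,z] = [w▷x,y,z]+[x,w▷y,z]+[x,y,w▷z] for all w,x,y,z, then (A, [_,_,_]) is a Lie triple system, i.e., the triple bracket satisfies [x,y,z] = -[y,x,z], [x,y,z]+[y,z,x]+[z,x,y] = 0, and [u,v,[x,y,z]] = [[u,v,x],y,z]+[x,[u,v,y],z]+[x,y,[u,v,z]]. -/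
/-!
Skew-symmetry is built into the triple bracket. Writing `L_w = op w`, the operator
`[u, v, ·]` equals `⁅L_u, L_v⁆ - L_{u ▷ v - v ▷ u}`. Identity (2) says that every `L_w` is a
derivation of the bracket, and derivations of a trilinear map are closed under differences
and commutators, so `[u, v, ·]` is a derivation as well, which is the Lie triple identity.
-/

section

variable {K A : Type*} [CommRing K] [AddCommGroup A] [Module K A]

def IsTripleDerivation (t : A →ₗ[K] A →ₗ[K] A →ₗ[K] A) (D : Module.End K A) : Prop :=
  ∀ x y z, D (t x y z) = t (D x) y z + t x (D y) z + t x y (D z)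

namespace IsTripleDerivation

variable {t : A →ₗ[K] A →ₗ[K] A →ₗ[K] A} {D₁ D₂ : Module.End K A}

theorem sub (h₁ : IsTripleDerivation t D₁) (h₂ : IsTripleDerivation t D₂) :
    IsTripleDerivation t (D₁ - D₂) := by
  intro x y z
  simp only [LinearMap.sub_apply, h₁ x y z, h₂ x y z, map_sub]
  abel

theorem lie (h₁ : IsTripleDerivation t D₁) (h₂ : IsTripleDerivation t D₂) :
    IsTripleDerivation t ⁅D₁, D₂⁆ := by
  intro x y z
  simp only [Ring.lie_def, LinearMap.sub_apply, Module.End.mul_apply, h₁ _ _ _, h₂ _ _ _,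
    map_add, map_sub]
  abel

end IsTripleDerivation

namespace LinearMap

/-- `(x, y, z) ↦ op x (op y z) - op (op x y) z`, the associator of `op`. -/
def associator (op : A →ₗ[K] A →ₗ[K] A) : A →ₗ[K] A →ₗ[K] A →ₗ[K] A :=
  ((llcomp K A A A).comp op).compl₂ op - op.compr₂ op

def associatorBracket (op : A →ₗ[K] A →ₗ[K] A) : A →ₗ[K] A →ₗ[K] A →ₗ[K] A :=
  op.associator - op.associator.flip

variable (op : A →ₗ[K] A →ₗ[K] A)

theorem associatorBracket_apply (x y z : A) :
    op.associatorBracket x y z =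
      (op x (op y z) - op (op x y) z) - (op y (op x z) - op (op y x) z) := rfl

theorem associatorBracket_swap (x y z : A) :
    op.associatorBracket y x z = -op.associatorBracket x y z := by
  simp only [associatorBracket_apply]
  abel

theorem associatorBracket_eq_lie (u v : A) :
    op.associatorBracket u v = ⁅op u, op v⁆ - op (op u v - op v u) := by
  ext z
  simp only [associatorBracket_apply, Ring.lie_def, sub_apply, Module.End.mul_apply, map_sub]
  abel

theorem isTripleDerivation_associatorBracket {t : A →ₗ[K] A →ₗ[K] A →ₗ[K] A}
    (h : ∀ w, IsTripleDerivation t (op w)) (u v : A) :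
    IsTripleDerivation t (op.associatorBracket u v) := by
  rw [associatorBracket_eq_lie]
  exact ((h u).lie (h v)).sub (h _)

end LinearMap

end

/-- If an algebra `(A, ▷)` satisfies the two Lie admissible triple (LAT) identities,
then its triple bracket makes `A` a Lie triple system. -/
theorem lat_is_lie_triple_system {K A : Type*} [Field K] [AddCommGroup A] [Module K A]
    (op : A →ₗ[K] A →ₗ[K] A) (trib : A → A → A → A)
    (htrib : ∀ x y z : A, trib x y z =
      (op x (op y z) - op (op x y) z) - (op y (op x z) - op (op y x) z))
    (h1 : ∀ x y z : A, trib x y z + trib y z x + trib z x y = 0)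
    (h2 : ∀ w x y z : A, op w (trib x y z) =
      trib (op w x) y z + trib x (op w y) z + trib x y (op w z)) :
    (∀ x y z : A, trib x y z = - trib y x z) ∧
    (∀ x y z : A, trib x y z + trib y z x + trib z x y = 0) ∧
    (∀ u v x y z : A, trib u v (trib x y z) =
      trib (trib u v x) y z + trib x (trib u v y) z + trib x y (trib u v z)) := by
  obtain rfl : trib = fun x y z => op.associatorBracket x y z := by
    funext x y z
    exact htrib x y z
  exact ⟨fun x y z => op.associatorBracket_swap y x z, h1,
    fun u v => op.isTripleDerivation_associatorBracket h2 u v⟩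
end

section
/- Let (A, [_,_], ▶) be a post-Lie algebra over a field of characteristic zero. Define x ▷ y = x ▶ y + (1/2)[x,y]. Then the skew associator of ▷ satisfies ass_▷(x,y,z) - ass_▷(y,x,z) = -(1/4)[[x,y],z] for all x,y,z, where ass_▷(x,y,z) = x▷(y▷z) - (x▷y)▷z. -/
/-!
For `x ▷ y = x ▶ y + c [x, y]`, the skew associator of `▷` splits into three parts: the skew
associator of `▶`, which the first post-Lie axiom identifies with `[x, y] ▶ z`; the cross terms,
which collapse to `-2c [x, y] ▶ z` because each `x ▶ _` is a derivation of the bracket; and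
`c²` times the skew associator of the bracket, which is `-[[x, y], z]` by the Jacobi identity.
At `c = 1/2` the first two cancel.
-/

def skewAssociator {A : Type*} [Sub A] (m : A → A → A) (x y z : A) : A :=
  (m x (m y z) - m (m x y) z) - (m y (m x z) - m (m y x) z)

theorem skewAssociator_lie {L : Type*} [LieRing L] (x y z : L) :
    skewAssociator (fun a b : L => ⁅a, b⁆) x y z = -⁅⁅x, y⁆, z⁆ := by
  simp only [skewAssociator, leibniz_lie x y z, ← lie_skew x y, neg_lie]
  abel

section
variable {K A : Type*} [CommRing K] [LieRing A] [LieAlgebra K A] (bt : A →ₗ[K] A →ₗ[K] A)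

theorem skewAssociator_add_smul_lie
    (hder : ∀ x y z : A, bt x ⁅y, z⁆ = ⁅bt x y, z⁆ + ⁅y, bt x z⁆) (c : K) (x y z : A) :
    skewAssociator (fun a b => bt a b + c • ⁅a, b⁆) x y z =
      skewAssociator (fun a b => bt a b) x y z - (2 * c) • bt ⁅x, y⁆ z
        + c ^ 2 • skewAssociator (fun a b : A => ⁅a, b⁆) x y z := by
  simp only [skewAssociator, map_add, map_smul, LinearMap.add_apply, LinearMap.smul_apply,
    lie_add, add_lie, lie_smul, smul_lie, hder, ← lie_skew x y, map_neg, LinearMap.neg_apply]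
  module

theorem skewAssociator_postLie
    (hpl1 : ∀ x y z : A, bt ⁅x, y⁆ z =
      bt x (bt y z) - bt (bt x y) z - (bt y (bt x z) - bt (bt y x) z))
    (hder : ∀ x y z : A, bt x ⁅y, z⁆ = ⁅bt x y, z⁆ + ⁅y, bt x z⁆) (c : K) (x y z : A) :
    skewAssociator (fun a b => bt a b + c • ⁅a, b⁆) x y z =
      (1 - 2 * c) • bt ⁅x, y⁆ z - c ^ 2 • ⁅⁅x, y⁆, z⁆ := by
  rw [skewAssociator_add_smul_lie bt hder, skewAssociator_lie, skewAssociator, ← hpl1]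
  module
end

/-- In a post-Lie algebra over a field of characteristic zero, the product
`x ▷ y = x ▶ y + (1/2)[x,y]` has skew associator `-(1/4)[[x,y],z]`. -/
theorem postLie_skew_associator {K A : Type*} [Field K] [CharZero K]
    [LieRing A] [LieAlgebra K A]
    (bt : A →ₗ[K] A →ₗ[K] A)
    (hpl1 : ∀ x y z : A, bt ⁅x, y⁆ z =
      bt x (bt y z) - bt (bt x y) z - (bt y (bt x z) - bt (bt y x) z))
    (hpl2 : ∀ x y z : A, bt x ⁅y, z⁆ = ⁅bt x y, z⁆ + ⁅y, bt x z⁆)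
    (rd : A → A → A)
    (hrd : ∀ x y : A, rd x y = bt x y + (2 : K)⁻¹ • ⁅x, y⁆) :
    ∀ x y z : A,
      (rd x (rd y z) - rd (rd x y) z) - (rd y (rd x z) - rd (rd y x) z) =
        -((4 : K)⁻¹ • ⁅⁅x, y⁆, z⁆) := by
  intro x y z
  obtain rfl : rd = fun a b => bt a b + (2 : K)⁻¹ • ⁅a, b⁆ := funext₂ hrd
  have half_sq : ((2 : K)⁻¹) ^ 2 = (4 : K)⁻¹ := by norm_num
  have h := skewAssociator_postLie bt hpl1 hpl2 (2 : K)⁻¹ x y z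
  rw [mul_inv_cancel₀ two_ne_zero, sub_self, zero_smul, zero_sub, half_sq] at h
  exact h
end

section
/- Let (A, [_,_], ▶) be a post-Lie algebra over a field of characteristic zero and define x ▷ y = x ▶ y + (1/2)[x,y]. Then (A, ▷) is Lie admissible, i.e., setting [x,y,z] = (x▷(y▷z)-(x▷y)▷z) - (y▷(x▷z)-(y▷x)▷z), one has [x,y,z]+[y,z,x]+[z,x,y] = 0 for all x,y,z ∈ A. -/
/-!
The commutator of `x ▷ y = x ▶ y + ½[x, y]` is `x ▶ y - y ▶ x + [x, y]`, the bracket of the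
sub-adjacent Lie algebra of the post-Lie algebra; the two post-Lie axioms are exactly what makes
it satisfy the Jacobi identity. For any biadditive product the cyclic sum of the skew-symmetrized
associator is minus the Jacobiator of its commutator, so it vanishes.
-/

def jacobiator {M : Type*} [Add M] (b : M → M → M) (x y z : M) : M :=
  b (b x y) z + b (b y z) x + b (b z x) y

namespace AddMonoidHom

variable {M : Type*} [AddCommGroup M] (μ : M →+ M →+ M)

def skewAssociator (x y z : M) : M :=
  μ x (μ y z) - μ (μ x y) z - (μ y (μ x z) - μ (μ y x) z)

def commutator (x y : M) : M := μ x y - μ y x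

theorem skewAssociator_cyclic_sum (x y z : M) :
    μ.skewAssociator x y z + μ.skewAssociator y z x + μ.skewAssociator z x y =
      -jacobiator μ.commutator x y z := by
  simp only [skewAssociator, jacobiator, commutator, map_sub, sub_apply]
  abel

end AddMonoidHom

section PostLie

variable {A : Type*} [LieRing A] (β : A →+ A →+ A)

def postLieBracket (x y : A) : A := β x y - β y x + ⁅x, y⁆

theorem jacobiator_postLieBracket
    (hpl1 : ∀ x y z : A, β ⁅x, y⁆ z = β x (β y z) - β (β x y) z - (β y (β x z) - β (β y x) z))
    (hpl2 : ∀ x y z : A, β x ⁅y, z⁆ = ⁅β x y, z⁆ + ⁅y, β x z⁆) (x y z : A) :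
    jacobiator (postLieBracket β) x y z = 0 := by
  simp only [jacobiator, postLieBracket, map_add, map_sub, AddMonoidHom.add_apply,
    AddMonoidHom.sub_apply, hpl1, hpl2, add_lie, sub_lie]
  have lie_jacobi' : ⁅⁅x, y⁆, z⁆ + ⁅⁅y, z⁆, x⁆ + ⁅⁅z, x⁆, y⁆ = 0 := by
    rw [← neg_eq_zero, ← lie_jacobi x y z, ← lie_skew x ⁅y, z⁆, ← lie_skew y ⁅z, x⁆,
      ← lie_skew z ⁅x, y⁆]
    abel
  rw [← lie_skew x (β z y), ← lie_skew y (β x z), ← lie_skew z (β y x), ← lie_jacobi']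
  abel

end PostLie

/-- In a post-Lie algebra over a field of characteristic zero, the product
`x ▷ y = x ▶ y + (1/2)[x,y]` is Lie admissible: the skew-symmetrized associator
satisfies the cyclic sum identity. -/
theorem postLie_gives_lie_admissible {K A : Type*} [Field K] [CharZero K]
    [LieRing A] [LieAlgebra K A]
    (bt : A →ₗ[K] A →ₗ[K] A)
    (hpl1 : ∀ x y z : A, bt ⁅x, y⁆ z =
      bt x (bt y z) - bt (bt x y) z - (bt y (bt x z) - bt (bt y x) z))
    (hpl2 : ∀ x y z : A, bt x ⁅y, z⁆ = ⁅bt x y, z⁆ + ⁅y, bt x z⁆)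
    (rd : A → A → A)
    (hrd : ∀ x y : A, rd x y = bt x y + (2 : K)⁻¹ • ⁅x, y⁆)
    (trib : A → A → A → A)
    (htrib : ∀ x y z : A, trib x y z =
      (rd x (rd y z) - rd (rd x y) z) - (rd y (rd x z) - rd (rd y x) z)) :
    ∀ x y z : A, trib x y z + trib y z x + trib z x y = 0 := by
  intro x y z
  let β : A →+ A →+ A := LinearMap.toAddMonoidHom'.comp bt.toAddMonoidHom
  let μ : A →+ A →+ A := LinearMap.toAddMonoidHom'.comp
    (bt + (2 : K)⁻¹ • (LieModule.toEnd K A A : A →ₗ[K] A →ₗ[K] A)).toAddMonoidHom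
  have rd_eq : ∀ a b, rd a b = μ a b := by
    intro a b
    simp [hrd, μ]
  have trib_eq : ∀ a b c, trib a b c = μ.skewAssociator a b c := by
    intro a b c
    simp only [htrib, rd_eq]
    rfl
  have commutator_eq : μ.commutator = postLieBracket β := by
    funext a b
    show μ a b - μ b a = bt a b - bt b a + ⁅a, b⁆
    rw [← rd_eq, ← rd_eq, hrd, hrd, ← lie_skew b a]
    module
  rw [trib_eq, trib_eq, trib_eq, AddMonoidHom.skewAssociator_cyclic_sum, commutator_eq,
    jacobiator_postLieBracket β hpl1 hpl2, neg_zero]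
end

section
/- Let (A, [_,_], ▶) be a post-Lie algebra over a field of characteristic zero. Define x ▷ y = x ▶ y + (1/2)[x,y]. Then (A, ▷) is a Lie admissible triple algebra: with triple bracket [x,y,z] := ass_▷(x,y,z) - ass_▷(y,x,z), the identities [x,y,z]+[y,z,x]+[z,x,y]=0 and w▷[x,y,z] = [w▷x,y,z]+[x,w▷y,z]+[x,y,w▷z] hold for all w,x,y,z ∈ A. -/
/-!
Expanding `▷` and antisymmetrising in `x, y`, the pure `▶` terms cancel by the first post-Lie
axiom, the mixed terms cancel by the second, and Jacobi leaves `[x,y,z] = -¼ [[x,y],z]`.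
The cyclic identity is then the Jacobi identity, and `w ▷ _ = w ▶ _ + ½ [w, _]` is a sum of
two derivations of the bracket, hence a derivation of `[[x,y],z]`.
-/

section LieRing

variable {A : Type*} [LieRing A]

theorem lie_lie_add_lie_lie_add_lie_lie (x y z : A) :
    ⁅⁅x, y⁆, z⁆ + ⁅⁅y, z⁆, x⁆ + ⁅⁅z, x⁆, y⁆ = 0 := by
  rw [← lie_skew ⁅y, z⁆ x, ← lie_skew ⁅z, x⁆ y, ← lie_skew ⁅x, y⁆ z]
  linear_combination (norm := abel) -lie_jacobi x y z

theorem map_lie_lie_of_leibniz {D : A → A} (hD : ∀ y z, D ⁅y, z⁆ = ⁅D y, z⁆ + ⁅y, D z⁆)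
    (x y z : A) : D ⁅⁅x, y⁆, z⁆ = ⁅⁅D x, y⁆, z⁆ + ⁅⁅x, D y⁆, z⁆ + ⁅⁅x, y⁆, D z⁆ := by
  rw [hD, hD, add_lie]

end LieRing

section PostLie

variable {K A : Type*} [Field K] [LieRing A] [LieAlgebra K A]
  {bt : A →ₗ[K] A →ₗ[K] A} {rd : A → A → A}

theorem postLie_rd_map_lie
    (hpl2 : ∀ x y z : A, bt x ⁅y, z⁆ = ⁅bt x y, z⁆ + ⁅y, bt x z⁆)
    (hrd : ∀ x y : A, rd x y = bt x y + (2 : K)⁻¹ • ⁅x, y⁆) (w y z : A) :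
    rd w ⁅y, z⁆ = ⁅rd w y, z⁆ + ⁅y, rd w z⁆ := by
  simp only [hrd, hpl2, add_lie, lie_add, smul_lie, lie_smul]
  rw [leibniz_lie, smul_add]
  abel

theorem postLie_rd_map_smul (hrd : ∀ x y : A, rd x y = bt x y + (2 : K)⁻¹ • ⁅x, y⁆)
    (c : K) (w v : A) : rd w (c • v) = c • rd w v := by
  rw [hrd, hrd, map_smul, lie_smul, smul_add, smul_comm c]

theorem postLie_rd_assoc_sub_assoc_swap (h2 : (2 : K) ≠ 0)
    (hpl1 : ∀ x y z : A, bt ⁅x, y⁆ z =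
      bt x (bt y z) - bt (bt x y) z - (bt y (bt x z) - bt (bt y x) z))
    (hpl2 : ∀ x y z : A, bt x ⁅y, z⁆ = ⁅bt x y, z⁆ + ⁅y, bt x z⁆)
    (hrd : ∀ x y : A, rd x y = bt x y + (2 : K)⁻¹ • ⁅x, y⁆) (x y z : A) :
    (rd x (rd y z) - rd (rd x y) z) - (rd y (rd x z) - rd (rd y x) z) =
      -(4 : K)⁻¹ • ⁅⁅x, y⁆, z⁆ := by
  simp only [hrd, map_add, map_smul, LinearMap.add_apply, LinearMap.smul_apply,
    lie_add, add_lie, lie_smul, smul_lie, smul_add, smul_sub, hpl1, hpl2, lie_lie]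
  have h4 : (4 : K) ≠ 0 := by
    rw [show (4 : K) = 2 * 2 by norm_num]; exact mul_ne_zero h2 h2
  match_scalars <;> field_simp <;> ring

end PostLie

/-- In a post-Lie algebra over a field of characteristic zero, the product
`x ▷ y = x ▶ y + (1/2)[x,y]` makes `A` a Lie admissible triple algebra:
its triple bracket satisfies the cyclic identity and `▷` acts on it by derivations. -/
theorem postLie_gives_LAT {K A : Type*} [Field K] [CharZero K]
    [LieRing A] [LieAlgebra K A]
    (bt : A →ₗ[K] A →ₗ[K] A)
    (hpl1 : ∀ x y z : A, bt ⁅x, y⁆ z =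
      bt x (bt y z) - bt (bt x y) z - (bt y (bt x z) - bt (bt y x) z))
    (hpl2 : ∀ x y z : A, bt x ⁅y, z⁆ = ⁅bt x y, z⁆ + ⁅y, bt x z⁆)
    (rd : A → A → A)
    (hrd : ∀ x y : A, rd x y = bt x y + (2 : K)⁻¹ • ⁅x, y⁆)
    (trib : A → A → A → A)
    (htrib : ∀ x y z : A, trib x y z =
      (rd x (rd y z) - rd (rd x y) z) - (rd y (rd x z) - rd (rd y x) z)) :
    (∀ x y z : A, trib x y z + trib y z x + trib z x y = 0) ∧
    (∀ w x y z : A, rd w (trib x y z) =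
      trib (rd w x) y z + trib x (rd w y) z + trib x y (rd w z)) := by
  have trib_eq : ∀ x y z, trib x y z = -(4 : K)⁻¹ • ⁅⁅x, y⁆, z⁆ := fun x y z => by
    rw [htrib, postLie_rd_assoc_sub_assoc_swap two_ne_zero hpl1 hpl2 hrd]
  refine ⟨fun x y z => ?_, fun w x y z => ?_⟩
  · rw [trib_eq, trib_eq, trib_eq, ← smul_add, ← smul_add, lie_lie_add_lie_lie_add_lie_lie,
      smul_zero]
  · rw [trib_eq, trib_eq, trib_eq, trib_eq, postLie_rd_map_smul hrd,
      map_lie_lie_of_leibniz (postLie_rd_map_lie hpl2 hrd w), smul_add, smul_add]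
end

section
/- For all positive integers n and k, the identity ∑_{j=1}^{n-1} (n−j)·C(k−2+(n−j), n−j) + C(k+(n−1), n−1) = n·C((k−1)+(n−1), n−1) holds, where C(m,r) denotes the binomial coefficient m choose r. -/
/-! Substituting `n = m + 1`, `k = a + 1` and `i = m - j` removes every truncated subtraction.
The resulting identity follows by induction on `m`, with Pascal's rule applied to the new
binomial coefficient on each side. -/

open Finset

theorem sum_succ_mul_choose_add_choose (a m : ℕ) :
    ∑ i ∈ range m, (i + 1) * (a + i).choose (i + 1) + (a + 1 + m).choose m
      = (m + 1) * (a + m).choose m := by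
  induction m with
  | zero => simp
  | succ m ih =>
    have pascal_left : (a + 1 + (m + 1)).choose (m + 1)
        = (a + 1 + m).choose m + (a + (m + 1)).choose (m + 1) := by
      rw [show a + 1 + (m + 1) = a + 1 + m + 1 by ring, Nat.choose_succ_succ', add_right_comm,
        add_assoc]
    have pascal_right : (a + (m + 1)).choose (m + 1)
        = (a + m).choose m + (a + m).choose (m + 1) := by
      rw [← add_assoc, Nat.choose_succ_succ']
    rw [sum_range_succ, pascal_left, pascal_right]
    linear_combination ih

/-- For positive integers `n`, `k`:
`∑_{j=1}^{n-1} (n−j)·C(k−2+(n−j), n−j) + C(k+(n−1), n−1) = n·C((k−1)+(n−1), n−1)`. -/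
theorem binomial_identity (n k : ℕ) (hn : 1 ≤ n) (hk : 1 ≤ k) :
    (∑ j ∈ Finset.Icc 1 (n - 1), (n - j) * Nat.choose (k + (n - j) - 2) (n - j))
      + Nat.choose (k + (n - 1)) (n - 1)
      = n * Nat.choose (k + n - 2) (n - 1) := by
  obtain ⟨m, rfl⟩ := Nat.exists_eq_add_of_le' hn
  obtain ⟨a, rfl⟩ := Nat.exists_eq_add_of_le' hk
  have reindex : ∑ j ∈ Icc 1 m, (m + 1 - j) * (a + 1 + (m + 1 - j) - 2).choose (m + 1 - j)
      = ∑ i ∈ range m, (i + 1) * (a + i).choose (i + 1) := by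
    refine sum_nbij' (m - ·) (m - ·) ?_ ?_ ?_ ?_ ?_ <;> intro j hj <;>
      simp only [mem_Icc, mem_range] at hj ⊢
    all_goals try omega
    rw [show m + 1 - j = m - j + 1 by omega, show a + 1 + (m - j + 1) - 2 = a + (m - j) by omega]
  simpa [reindex, show a + 1 + (m + 1) - 2 = a + m by omega] using
    sum_succ_mul_choose_add_choose a m
end

section
/- Fix a positive integer n and define α_k(n) recursively by α_0(n) = 1 and, for k ≥ 1, α_k(n) = C(k+n−1, n−1) + ∑_{i=2}^{k} ( ∑_{j=1}^{n-1} (n−j)·C(i−2+(n−j), n−j) ) · α_{k−i}(n). Then α_k(n) = n^k for all k ≥ 0. -/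
/-!
Write `n = m + 1`. The recursion determines `α` from `α 0`, so it suffices that `k ↦ n ^ k`
satisfies it. Substituting `t = n - j` turns the coefficient of `α (k - i)` into
`w (i - 2)` with `w q = ∑_{t=1}^{m} t * C(q + t, t)`, and then `n ^ k` solves the recursion
because, by Pascal's rule and induction on `m`, `w q + C(q + m + 2, m) = n * C(q + m + 1, m)`:
this is exactly what makes the right-hand side at `k + 2` equal `n` times the one at `k + 1`.
-/

open Finset

def osbbWeight (m q : ℕ) : ℕ := ∑ t ∈ Icc 1 m, t * (q + t).choose t

theorem osbbWeight_add_choose (m q : ℕ) :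
    osbbWeight m q + (q + m + 2).choose m = (m + 1) * (q + m + 1).choose m := by
  induction m with
  | zero => simp [osbbWeight]
  | succ m ih =>
    rw [osbbWeight, sum_Icc_succ_top (by omega), ← osbbWeight,
      show q + (m + 1) + 2 = q + m + 2 + 1 by omega, show q + (m + 1) + 1 = q + m + 1 + 1 by omega,
      show q + (m + 1) = q + m + 1 by omega, Nat.choose_succ_succ' (q + m + 2),
      Nat.choose_succ_succ' (q + m + 1)]
    linear_combination ih

theorem sum_Icc_one_reflect {M : Type*} [AddCommMonoid M] (f : ℕ → M) (m : ℕ) :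
    ∑ j ∈ Icc 1 m, f (m + 1 - j) = ∑ j ∈ Icc 1 m, f j := by
  rw [← Ico_add_one_right_eq_Icc, sum_Ico_reflect f 1 (Nat.le_succ _)]
  simp

theorem sum_Icc_reflect_eq_osbbWeight (m i : ℕ) (hi : 2 ≤ i) :
    ∑ j ∈ Icc 1 m, (m + 1 - j) * (i + (m + 1 - j) - 2).choose (m + 1 - j)
      = osbbWeight m (i - 2) := by
  rw [sum_Icc_one_reflect (fun t => t * (i + t - 2).choose t), osbbWeight]
  refine sum_congr rfl fun t _ => ?_
  rw [show i + t - 2 = i - 2 + t by omega]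

theorem choose_add_sum_osbbWeight_mul_pow (m k : ℕ) :
    (k + m).choose m + ∑ i ∈ Icc 2 k, osbbWeight m (i - 2) * (m + 1) ^ (k - i)
      = (m + 1) ^ k := by
  induction k using Nat.twoStepInduction with
  | zero => simp
  | one => simp [add_comm 1 m]
  | more k _ ih =>
    have hshift : ∑ i ∈ Icc 2 (k + 1), osbbWeight m (i - 2) * (m + 1) ^ (k + 2 - i)
        = (m + 1) * ∑ i ∈ Icc 2 (k + 1), osbbWeight m (i - 2) * (m + 1) ^ (k + 1 - i) := by
      rw [mul_sum]
      refine sum_congr rfl fun i hi => ?_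
      rw [show k + 2 - i = k + 1 - i + 1 by grind, pow_succ]
      ring
    rw [sum_Icc_succ_top (by omega), hshift, show k + 2 - (k + 2) = 0 by omega, pow_zero, mul_one,
      show k + 2 - 2 = k by omega, show k + 2 + m = k + m + 2 by omega]
    rw [show k + 1 + m = k + m + 1 by omega] at ih
    linear_combination osbbWeight_add_choose m k + (m + 1) * ih

theorem eq_of_recursion {R : Type*} [Semiring R] (b c : ℕ → R) {α β : ℕ → R} (h0 : α 0 = β 0)
    (hα : ∀ k, 1 ≤ k → α k = b k + ∑ i ∈ Icc 2 k, c i * α (k - i))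
    (hβ : ∀ k, 1 ≤ k → β k = b k + ∑ i ∈ Icc 2 k, c i * β (k - i)) (k : ℕ) : α k = β k := by
  induction k using Nat.strong_induction_on with
  | _ k ih =>
    rcases k.eq_zero_or_pos with rfl | hk
    · exact h0
    rw [hα k hk, hβ k hk]
    congr 1
    exact sum_congr rfl fun i hi => by rw [ih (k - i) (by grind)]

/-- The number `α_k(n)` of OSBB-words of length `k` over `n` ordered letters, defined by
`α_0 = 1` and the recursion over the length of the first block, equals `n^k`. -/
theorem osbb_count (n : ℕ) (hn : 1 ≤ n) (α : ℕ → ℕ)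
    (h0 : α 0 = 1)
    (hrec : ∀ k : ℕ, 1 ≤ k →
      α k = Nat.choose (k + n - 1) (n - 1)
        + ∑ i ∈ Finset.Icc 2 k,
            (∑ j ∈ Finset.Icc 1 (n - 1),
              (n - j) * Nat.choose (i + (n - j) - 2) (n - j)) * α (k - i)) :
    ∀ k : ℕ, α k = n ^ k := by
  obtain ⟨m, rfl⟩ : ∃ m, n = m + 1 := ⟨n - 1, by omega⟩
  refine eq_of_recursion _ _ (by rw [h0, pow_zero]) hrec fun k _ => ?_
  rw [← choose_add_sum_osbbWeight_mul_pow m k, Nat.add_sub_cancel, ← add_assoc, Nat.add_sub_cancel]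
  congr 1
  exact sum_congr rfl fun i hi => by
    rw [sum_Icc_reflect_eq_osbbWeight m i (mem_Icc.1 hi).1]
end

section
/- Let (A, ▷) be a Lie admissible triple algebra with triple bracket [x,y,z] and derivations D_{x,y}(z) = [x,y,z]. Define x▶D_{y,z} := D_{x▷y,z} + D_{y,x▷z} for x,y,z ∈ A. Then for all w,x,y,z,t ∈ A: D_{x,y}∘D_{z,w} − D_{z,w}∘D_{x,y} = D_{[x,y,z],w} + D_{z,[x,y,w]}. -/
/-!
Each left multiplication `L_u = op u` is a derivation of the triple bracket, and
`D_{x,y} = ⁅L_x, L_y⁆ - L_{x▷y - y▷x}`. Derivations of a triadditive map are closed under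
differences and commutators, so `D_{x,y}` is itself a derivation of the triple bracket, which is
the claimed identity after moving one term across.
-/

section TriDerivation

variable {R M : Type*} [Semiring R] [AddCommGroup M] [Module R M]

def IsTriDerivation (f : M →+ M →+ M →+ M) (D : Module.End R M) : Prop :=
  ∀ a b c, D (f a b c) = f (D a) b c + f a (D b) c + f a b (D c)

variable {f : M →+ M →+ M →+ M} {D E : Module.End R M}

theorem IsTriDerivation.sub (hD : IsTriDerivation f D) (hE : IsTriDerivation f E) :
    IsTriDerivation f (D - E) := by
  intro a b c
  simp only [LinearMap.sub_apply, hD a b c, hE a b c, map_sub, AddMonoidHom.sub_apply]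
  abel

theorem IsTriDerivation.lie (hD : IsTriDerivation f D) (hE : IsTriDerivation f E) :
    IsTriDerivation f ⁅D, E⁆ := by
  intro a b c
  simp only [LieRing.of_associative_ring_bracket, LinearMap.sub_apply, Module.End.mul_apply,
    hD _ _ _, hE _ _ _, map_add, map_sub, AddMonoidHom.sub_apply]
  abel

end TriDerivation

section TripleBracket

variable {R A : Type*} [CommSemiring R] [AddCommGroup A] [Module R A]

def tripleBracket (op : A →ₗ[R] A →ₗ[R] A) : A →+ A →+ A →+ A :=
  AddMonoidHom.mk'
    (fun x => AddMonoidHom.mk'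
      (fun y => AddMonoidHom.mk'
        (fun z => (op x (op y z) - op (op x y) z) - (op y (op x z) - op (op y x) z))
        (by intros; simp only [map_add]; abel))
      (by intros; ext; simp only [AddMonoidHom.mk'_apply, AddMonoidHom.add_apply, map_add,
            LinearMap.add_apply]; abel))
    (by intros; ext; simp only [AddMonoidHom.mk'_apply, AddMonoidHom.add_apply, map_add,
          LinearMap.add_apply]; abel)

theorem tripleBracket_apply (op : A →ₗ[R] A →ₗ[R] A) (x y z : A) :
    tripleBracket op x y z = (op x (op y z) - op (op x y) z) - (op y (op x z) - op (op y x) z) :=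
  rfl

theorem tripleBracket_apply_eq_lie_sub (op : A →ₗ[R] A →ₗ[R] A) (x y z : A) :
    tripleBracket op x y z = (⁅op x, op y⁆ - op (op x y - op y x)) z := by
  simp only [tripleBracket_apply, LieRing.of_associative_ring_bracket, LinearMap.sub_apply,
    Module.End.mul_apply, map_sub]
  abel

theorem isTriDerivation_tripleBracket_lie_sub {op : A →ₗ[R] A →ₗ[R] A}
    (hL : ∀ u, IsTriDerivation (tripleBracket op) (op u)) (x y : A) :
    IsTriDerivation (tripleBracket op) (⁅op x, op y⁆ - op (op x y - op y x)) :=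
  ((hL x).lie (hL y)).sub (hL _)

end TripleBracket

theorem lat_derivation_commutator_general {K A : Type*} [Field K] [AddCommGroup A] [Module K A]
    (op : A →ₗ[K] A →ₗ[K] A) (trib : A → A → A → A)
    (htrib : ∀ x y z : A, trib x y z =
      (op x (op y z) - op (op x y) z) - (op y (op x z) - op (op y x) z))
    (hLAT2 : ∀ w x y z : A, op w (trib x y z) =
      trib (op w x) y z + trib x (op w y) z + trib x y (op w z)) :
    ∀ x y z w t : A,
      trib x y (trib z w t) - trib z w (trib x y t) =
        trib (trib x y z) w t + trib z (trib x y w) t := by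
  obtain rfl : trib = fun x y z => tripleBracket op x y z := by
    funext x y z
    exact htrib x y z
  intro x y z w t
  have hD := isTriDerivation_tripleBracket_lie_sub hLAT2 x y z w t
  simp only [← tripleBracket_apply_eq_lie_sub] at hD ⊢
  rw [hD]
  abel

/-- In a Lie admissible triple algebra, the maps `D_{x,y} : t ↦ [x,y,t]` satisfy
`D_{x,y}∘D_{z,w} − D_{z,w}∘D_{x,y} = D_{[x,y,z],w} + D_{z,[x,y,w]}`. -/
theorem lat_derivation_commutator {K A : Type*} [Field K] [AddCommGroup A] [Module K A]
    (op : A →ₗ[K] A →ₗ[K] A) (trib : A → A → A → A)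
    (htrib : ∀ x y z : A, trib x y z =
      (op x (op y z) - op (op x y) z) - (op y (op x z) - op (op y x) z))
    (hLAT1 : ∀ x y z : A, trib x y z + trib y z x + trib z x y = 0)
    (hLAT2 : ∀ w x y z : A, op w (trib x y z) =
      trib (op w x) y z + trib x (op w y) z + trib x y (op w z)) :
    ∀ x y z w t : A,
      trib x y (trib z w t) - trib z w (trib x y t) =
        trib (trib x y z) w t + trib z (trib x y w) t :=
  lat_derivation_commutator_general op trib htrib hLAT2
end
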